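/- arXiv:2012.08660 — 2 statements merged into one kernel-verified Lean document; each statement's English description precedes it below -/
import Mathlib

section
/- Let f_i : ℝ^d → ℝ, i = 1,…,N, be convex and L-smooth, x_1,…,x_N ∈ ℝ^d with average x̄, and g = (1/N)∑_i ∇f_i(x_i). Then for each j, f := (1/N)∑_i f_i satisfies f(x_j) ≤ f(x̄) + ⟨g, x_j - x̄⟩ + L‖x_j - x̄‖² + (L/N)∑_i ‖x_i - x̄‖², and consequently (1/N)∑_j f(x_j) ≤ f(x̄) + (2L/N)∑_i ‖x_i - x̄‖². -/
/-!
Descent lemma with a displaced gradient: for `L`-smooth `f_i`, expanding around `x̄` but using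
`∇f_i(x_i)` instead of `∇f_i(x̄)` costs `⟪∇f_i(x̄) - ∇f_i(x_i), x_j - x̄⟫ ≤ L‖x_i - x̄‖‖x_j - x̄‖`,
which AM-GM splits into `(L/2)(‖x_i - x̄‖² + ‖x_j - x̄‖²)`. Averaging over `i` gives the first
bound (even with `L/(2N)`); averaging that over `j`, the linear terms cancel because
`∑_j (x_j - x̄) = 0`, which gives the second.
-/

open Finset
open scoped RealInnerProductSpace NNReal

section Descent

variable {E : Type*} [NormedAddCommGroup E] [InnerProductSpace ℝ E] [CompleteSpace E]
  {f : E → ℝ} {f' : E → E} {K : ℝ≥0}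

theorem le_add_inner_add_half_mul_sq_of_lipschitzWith_gradient
    (hf : ∀ x, HasGradientAt f (f' x) x) (hK : LipschitzWith K f') (x y : E) :
    f y ≤ f x + ⟪f' x, y - x⟫ + K / 2 * ‖y - x‖ ^ 2 := by
  set d := y - x
  let φ : ℝ → ℝ := fun t => f (x + t • d) - t * ⟪f' x, d⟫ - K / 2 * t ^ 2 * ‖d‖ ^ 2
  have hφ : ∀ t, HasDerivAt φ (⟪f' (x + t • d) - f' x, d⟫ - K * t * ‖d‖ ^ 2) t := by
    intro t
    have hline : HasDerivAt (fun t : ℝ => x + t • d) d t := by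
      simpa using ((hasDerivAt_id t).smul_const d).const_add x
    have := (((hf _).hasFDerivAt.comp_hasDerivAt t hline).sub
      ((hasDerivAt_id t).mul_const ⟪f' x, d⟫)).sub
      (((hasDerivAt_pow 2 t).const_mul (K / 2 : ℝ)).mul_const (‖d‖ ^ 2))
    refine this.congr_deriv ?_
    simp only [InnerProductSpace.toDual_apply_apply, inner_sub_left]
    ring
  have hφ' : ∀ t ∈ Set.Ioi (0 : ℝ), ⟪f' (x + t • d) - f' x, d⟫ - K * t * ‖d‖ ^ 2 ≤ 0 := by
    intro t ht
    have hlip : ‖f' (x + t • d) - f' x‖ ≤ K * (t * ‖d‖) := by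
      simpa [dist_eq_norm, norm_smul, abs_of_pos (Set.mem_Ioi.mp ht)] using
        hK.dist_le_mul (x + t • d) x
    have := (real_inner_le_norm (f' (x + t • d) - f' x) d).trans
      (mul_le_mul_of_nonneg_right hlip (norm_nonneg d))
    linarith
  have hanti : AntitoneOn φ (Set.Ici 0) :=
    antitoneOn_of_hasDerivWithinAt_nonpos (convex_Ici 0)
      (fun t _ => (hφ t).continuousAt.continuousWithinAt)
      (fun t _ => (hφ t).hasDerivWithinAt) (by rwa [interior_Ici])
  have := hanti Set.self_mem_Ici (Set.mem_Ici.mpr zero_le_one) zero_le_one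
  simp only [φ, d, one_smul, zero_smul, add_zero, add_sub_cancel] at this
  linarith

theorem le_add_inner_add_mul_sq_of_lipschitzWith_gradient
    (hf : ∀ x, HasGradientAt f (f' x) x) (hK : LipschitzWith K f') (x y z : E) :
    f y ≤ f x + ⟪f' z, y - x⟫ + K * ‖y - x‖ ^ 2 + K / 2 * ‖z - x‖ ^ 2 := by
  have hdescent := le_add_inner_add_half_mul_sq_of_lipschitzWith_gradient hf hK x y
  have hlip : ‖f' x - f' z‖ ≤ K * ‖z - x‖ := by
    simpa [dist_eq_norm, norm_sub_rev z x] using hK.dist_le_mul x z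
  have hcross : ⟪f' x - f' z, y - x⟫ ≤ K / 2 * (‖z - x‖ ^ 2 + ‖y - x‖ ^ 2) :=
    calc ⟪f' x - f' z, y - x⟫ ≤ ‖f' x - f' z‖ * ‖y - x‖ := real_inner_le_norm _ _
      _ ≤ K * ‖z - x‖ * ‖y - x‖ := by gcongr
      _ ≤ K / 2 * (‖z - x‖ ^ 2 + ‖y - x‖ ^ 2) := by
        nlinarith [two_mul_le_add_sq ‖z - x‖ ‖y - x‖, K.coe_nonneg]
  rw [inner_sub_left] at hcross
  linarith

end Descent

theorem sum_sub_inv_card_smul_sum_eq_zero {ι M : Type*} [Fintype ι] [AddCommGroup M] [Module ℝ M]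
    (x : ι → M) : ∑ i, (x i - (Fintype.card ι : ℝ)⁻¹ • ∑ j, x j) = 0 := by
  rcases isEmpty_or_nonempty ι with hι | hι
  · simp
  · rw [sum_sub_distrib, sum_const, card_univ, ← Nat.cast_smul_eq_nsmul ℝ, smul_inv_smul₀
      (by positivity), sub_self]

section Average

variable {E ι : Type*} [NormedAddCommGroup E] [InnerProductSpace ℝ E] [Fintype ι]

local notation "n" => (Fintype.card ι : ℝ)

theorem inv_card_mul_sum_le_of_lipschitzWith_gradient [CompleteSpace E] {f : ι → E → ℝ}
    {f' : ι → E → E} {K : ℝ≥0}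
    (hf : ∀ i x, HasGradientAt (f i) (f' i x) x) (hK : ∀ i, LipschitzWith K (f' i))
    (x : ι → E) (c : E) (j : ι) :
    n⁻¹ * ∑ i, f i (x j) ≤ n⁻¹ * ∑ i, f i c + ⟪n⁻¹ • ∑ i, f' i (x i), x j - c⟫
      + K * ‖x j - c‖ ^ 2 + K / (2 * n) * ∑ i, ‖x i - c‖ ^ 2 := by
  have hn : 0 < n := by exact_mod_cast Fintype.card_pos_iff.mpr ⟨j⟩
  have hsum := sum_le_sum fun i (_ : i ∈ univ) =>
    le_add_inner_add_mul_sq_of_lipschitzWith_gradient (hf i) (hK i) c (x j) (x i)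
  simp only [sum_add_distrib, ← sum_inner, sum_const, card_univ, nsmul_eq_mul, ← mul_sum] at hsum
  calc n⁻¹ * ∑ i, f i (x j)
      ≤ n⁻¹ * (∑ i, f i c + ⟪∑ i, f' i (x i), x j - c⟫ + n * (K * ‖x j - c‖ ^ 2)
        + K / 2 * ∑ i, ‖x i - c‖ ^ 2) := by gcongr
    _ = _ := by
      rw [real_inner_smul_left]
      field_simp

theorem inv_card_mul_sum_le_of_le_add_inner_add_sq [Nonempty ι] (F : E → ℝ) (x : ι → E)
    (c g : E) (hc : c = n⁻¹ • ∑ i, x i) (a b : ℝ)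
    (h : ∀ j, F (x j) ≤ F c + ⟪g, x j - c⟫ + a * ‖x j - c‖ ^ 2 + b) :
    n⁻¹ * ∑ j, F (x j) ≤ F c + a / n * ∑ j, ‖x j - c‖ ^ 2 + b := by
  have hn : 0 < n := by exact_mod_cast Fintype.card_pos
  have hcentered : ∑ j, ⟪g, x j - c⟫ = 0 := by
    rw [← inner_sum, hc, sum_sub_inv_card_smul_sum_eq_zero, inner_zero_right]
  have hsum := sum_le_sum fun j (_ : j ∈ univ) => h j
  simp only [sum_add_distrib, hcentered, add_zero, sum_const, card_univ, nsmul_eq_mul,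
    ← mul_sum] at hsum
  calc n⁻¹ * ∑ j, F (x j)
      ≤ n⁻¹ * (n * F c + a * ∑ j, ‖x j - c‖ ^ 2 + n * b) := by gcongr
    _ = _ := by field_simp

end Average

theorem avg_function_at_local_iterates_general
    {E : Type*} [NormedAddCommGroup E] [InnerProductSpace ℝ E] [CompleteSpace E]
    {N : ℕ} (L : ℝ) (hL : 0 < L)
    (f : Fin N → E → ℝ) (f' : Fin N → E → E)
    (hgrad : ∀ i x, HasGradientAt (f i) (f' i x) x)
    (hsmooth : ∀ i, LipschitzWith (Real.toNNReal L) (f' i))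
    (x : Fin N → E) (xbar : E) (hxbar : xbar = (N : ℝ)⁻¹ • ∑ i, x i)
    (g : E) (hg : g = (N : ℝ)⁻¹ • ∑ i, f' i (x i))
    (fbar : E → ℝ) (hfbar : fbar = fun y => (N : ℝ)⁻¹ * ∑ i, f i y) :
    (∀ j : Fin N,
      fbar (x j) ≤ fbar xbar + ⟪g, x j - xbar⟫ + L * ‖x j - xbar‖^2
        + (L / N) * ∑ i, ‖x i - xbar‖^2) ∧
    (N : ℝ)⁻¹ * ∑ j, fbar (x j)
      ≤ fbar xbar + (2 * L / N) * ∑ i, ‖x i - xbar‖^2 := by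
  set S := ∑ i, ‖x i - xbar‖ ^ 2
  have key : ∀ j, fbar (x j) ≤ fbar xbar + ⟪g, x j - xbar⟫ + L * ‖x j - xbar‖ ^ 2
      + L / (2 * N) * S := by
    intro j
    have := inv_card_mul_sum_le_of_lipschitzWith_gradient hgrad hsmooth x xbar j
    rw [Fintype.card_fin, Real.coe_toNNReal L hL.le, ← hg] at this
    simpa only [hfbar] using this
  have hS : 0 ≤ L / N * S := by positivity
  have hhalf : L / (2 * N) * S = L / N * S / 2 := by ring
  have htwice : 2 * L / N * S = 2 * (L / N * S) := by ring
  refine ⟨fun j => by linarith [key j], ?_⟩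
  rcases N.eq_zero_or_pos with rfl | hN
  · simp [hfbar, S]
  have : Nonempty (Fin N) := ⟨⟨0, hN⟩⟩
  have havg := inv_card_mul_sum_le_of_le_add_inner_add_sq fbar x xbar g
    (by rwa [Fintype.card_fin]) L _ key
  rw [Fintype.card_fin] at havg
  linarith

theorem avg_function_at_local_iterates
    {E : Type*} [NormedAddCommGroup E] [InnerProductSpace ℝ E] [CompleteSpace E]
    {N : ℕ} (hN : 0 < N) (L : ℝ) (hL : 0 < L)
    (f : Fin N → E → ℝ) (f' : Fin N → E → E)
    (hgrad : ∀ i x, HasGradientAt (f i) (f' i x) x)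
    (hconv : ∀ i, ConvexOn ℝ Set.univ (f i))
    (hsmooth : ∀ i, LipschitzWith (Real.toNNReal L) (f' i))
    (x : Fin N → E) (xbar : E) (hxbar : xbar = (N : ℝ)⁻¹ • ∑ i, x i)
    (g : E) (hg : g = (N : ℝ)⁻¹ • ∑ i, f' i (x i))
    (fbar : E → ℝ) (hfbar : fbar = fun y => (N : ℝ)⁻¹ * ∑ i, f i y) :
    (∀ j : Fin N,
      fbar (x j) ≤ fbar xbar + ⟪g, x j - xbar⟫ + L * ‖x j - xbar‖^2
        + (L / N) * ∑ i, ‖x i - xbar‖^2) ∧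
    (N : ℝ)⁻¹ * ∑ j, fbar (x j)
      ≤ fbar xbar + (2 * L / N) * ∑ i, ‖x i - xbar‖^2 :=
  avg_function_at_local_iterates_general L hL f f' hgrad hsmooth x xbar hxbar g hg fbar hfbar
end

section
/- Let V be a closed convex set in ℝ^d, φ : V → ℝ convex, h : V → ℝ differentiable and strongly convex, and d(w,u) = h(w) - h(u) - ⟨∇h(u), w - u⟩ the Bregman divergence of h. Given u ∈ V, if w⁺ = argmin_{w∈V} {φ(w) + d(w,u)}, then for all w ∈ V: φ(w) + d(w,u) ≥ φ(w⁺) + d(w⁺,u) + d(w,w⁺). -/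
/-!
By convexity of `φ`, on the segment `w⁺ + t (w - w⁺)`, `t ∈ [0, 1]`, the objective
`φ + d(·, u)` is bounded above by the differentiable function
`φ w⁺ + d(w⁺ + t (w - w⁺), u) + t (φ w - φ w⁺)`, with equality at `t = 0`. That function is
therefore minimal at `t = 0`, so its right derivative there is nonnegative:
`φ w⁺ ≤ φ w + ⟪∇h w⁺ - ∇h u, w - w⁺⟫`. The three-point identity
`d(w, u) - d(w, w⁺) - d(w⁺, u) = ⟪∇h w⁺ - ∇h u, w - w⁺⟫` turns this into the claim.
-/

open scoped RealInnerProductSpace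
open AffineMap Set

theorem ConvexOn.map_lineMap_le {E : Type*} [AddCommGroup E] [Module ℝ E] {V : Set E}
    {φ : E → ℝ} (hφ : ConvexOn ℝ V φ) {x y : E} (hx : x ∈ V) (hy : y ∈ V) {t : ℝ}
    (ht : t ∈ Icc (0 : ℝ) 1) : φ (lineMap x y t) ≤ φ x + t * (φ y - φ x) := by
  have := hφ.2 hx hy (sub_nonneg.2 ht.2) ht.1 (sub_add_cancel 1 t)
  rw [← lineMap_apply_module, smul_eq_mul, smul_eq_mul] at this
  linarith

theorem IsMinOn.le_add_fderiv_of_convexOn {E : Type*} [NormedAddCommGroup E] [NormedSpace ℝ E]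
    {V : Set E} {φ g : E → ℝ} {g' : E →L[ℝ] ℝ} {x y : E} (hmin : IsMinOn (φ + g) V x)
    (hφ : ConvexOn ℝ V φ) (hg : HasFDerivAt g g' x) (hx : x ∈ V) (hy : y ∈ V) :
    φ x ≤ φ y + g' (y - x) := by
  set f : ℝ → ℝ := fun t => g (lineMap x y t) + t * (φ y - φ x)
  have hf : HasDerivAt f (g' (y - x) + (φ y - φ x)) 0 := by
    have hgl : HasDerivAt (fun t : ℝ => g (lineMap x y t)) (g' (y - x)) 0 :=
      hg.comp_hasDerivAt_of_eq 0 hasDerivAt_lineMap (lineMap_apply_zero x y).symm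
    simpa only [one_mul] using hgl.fun_add ((hasDerivAt_id' (0 : ℝ)).mul_const (φ y - φ x))
  have hfmin : IsMinOn f (Icc 0 1) 0 := by
    refine isMinOn_iff.2 fun t ht => ?_
    have hφt := hφ.map_lineMap_le hx hy ht
    have hmint : φ x + g x ≤ φ (lineMap x y t) + g (lineMap x y t) :=
      hmin (hφ.1.lineMap_mem hx hy ht)
    simp only [f, lineMap_apply_zero, zero_mul, add_zero]
    linarith
  have hcone : (1 : ℝ) - 0 ∈ posTangentConeAt (Icc (0 : ℝ) 1) 0 :=
    sub_mem_posTangentConeAt_of_segment_subset (segment_eq_Icc zero_le_one).subset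
  have hslope := hfmin.localize.hasFDerivWithinAt_nonneg hf.hasFDerivAt.hasFDerivWithinAt hcone
  simp only [sub_zero, ContinuousLinearMap.toSpanSingleton_apply, one_smul] at hslope
  linarith

def bregmanDiv {E : Type*} [NormedAddCommGroup E] [InnerProductSpace ℝ E] (h : E → ℝ)
    (h' : E → E) (w u : E) : ℝ :=
  h w - h u - ⟪h' u, w - u⟫

theorem bregmanDiv_three_point {E : Type*} [NormedAddCommGroup E] [InnerProductSpace ℝ E]
    (h : E → ℝ) (h' : E → E) (w v u : E) :
    bregmanDiv h h' w u - bregmanDiv h h' w v - bregmanDiv h h' v u = ⟪h' v - h' u, w - v⟫ := by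
  simp only [bregmanDiv, inner_sub_left, inner_sub_right]
  ring

theorem hasFDerivAt_bregmanDiv {E : Type*} [NormedAddCommGroup E] [InnerProductSpace ℝ E]
    {h : E → ℝ} (h' : E → E) {f' : StrongDual ℝ E} {x : E} (hf : HasFDerivAt h f' x) (u : E) :
    HasFDerivAt (fun w => bregmanDiv h h' w u) (f' - innerSL ℝ (h' u)) x := by
  have := (hf.sub_const (h u)).fun_sub ((innerSL ℝ (h' u)).hasFDerivAt.sub_const ⟪h' u, u⟫)
  simpa only [bregmanDiv, inner_sub_right, innerSL_apply_apply] using this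

theorem bregman_three_point_general
    {E : Type*} [NormedAddCommGroup E] [InnerProductSpace ℝ E] [CompleteSpace E]
    (V : Set E)
    (φ : E → ℝ) (hφ : ConvexOn ℝ V φ)
    (h : E → ℝ) (h' : E → E)
    (hgrad : ∀ x, HasGradientAt h (h' x) x)
    (d : E → E → ℝ)
    (hd : d = fun w u => h w - h u - ⟪h' u, w - u⟫)
    (u : E) (wp : E) (hwp : wp ∈ V)
    (hargmin : ∀ w ∈ V, φ wp + d wp u ≤ φ w + d w u) :
    ∀ w ∈ V, φ wp + d wp u + d w wp ≤ φ w + d w u := by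
  intro w hw
  replace hd : d = bregmanDiv h h' := hd
  subst hd
  have hmin : IsMinOn (φ + fun x => bregmanDiv h h' x u) V wp := hargmin
  have hopt := hmin.le_add_fderiv_of_convexOn hφ
    (hasFDerivAt_bregmanDiv h' (hgrad wp).hasFDerivAt u) hwp hw
  simp only [sub_apply, InnerProductSpace.toDual_apply_apply,
    innerSL_apply_apply, ← inner_sub_left] at hopt
  linarith [bregmanDiv_three_point h h' w wp u]

theorem bregman_three_point
    {E : Type*} [NormedAddCommGroup E] [InnerProductSpace ℝ E] [CompleteSpace E]
    (V : Set E) (hVclosed : IsClosed V) (hVconv : Convex ℝ V)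
    (φ : E → ℝ) (hφ : ConvexOn ℝ V φ)
    (h : E → ℝ) (h' : E → E)
    (hgrad : ∀ x, HasGradientAt h (h' x) x)
    (mS : ℝ) (hmS : 0 < mS) (hstrong : StrongConvexOn V mS h)
    (d : E → E → ℝ)
    (hd : d = fun w u => h w - h u - ⟪h' u, w - u⟫)
    (u : E) (hu : u ∈ V) (wp : E) (hwp : wp ∈ V)
    (hargmin : ∀ w ∈ V, φ wp + d wp u ≤ φ w + d w u) :
    ∀ w ∈ V, φ wp + d wp u + d w wp ≤ φ w + d w u :=
  bregman_three_point_general V φ hφ h h' hgrad d hd u wp hwp hargmin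
end
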